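/- Let r ≥ 1 and let ε̃_1, ..., ε̃_r be elements of ℂ* × (0,∞)^{r-1}, written ε̃_j = (ε̃_j^{(1)}, ..., ε̃_j^{(r)}) with ε̃_j^{(1)} a nonzero complex number and ε̃_j^{(i)} > 0 for 2 ≤ i ≤ r. Define f_0 : ℝ^{r+1} → ℂ × ℝ^{r-1} by f_0(x)^{(1)} := exp(Σ_{j=1}^r x^{(j)}·log(ε̃_j^{(1)})) · exp(2πi·x^{(r+1)}) and f_0(x)^{(i)} := ∏_{j=1}^r (ε̃_j^{(i)})^{x^{(j)}} for 2 ≤ i ≤ r, where log denotes the principal branch of the complex logarithm. Then f_0 is differentiable and, identifying ℂ × ℝ^{r-1} with ℝ^{r+1} via (z, x) ↦ (Re z, Im z, x), the Jacobian determinant of f_0 at every point P ∈ ℝ^{r+1} equals (-1)^{r+1} · 2π · det(L) · |f_0(P)^{(1)}|² · ∏_{i=2}^{r} f_0(P)^{(i)}, where L is the r×r real matrix with entries L_{ij} = log|ε̃_j^{(i)}| for 1 ≤ i, j ≤ r. -/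

import Mathlib

/-- The identification `ℂ × ℝ^s = ℝ^{s+2}`, `(z, x) ↦ (Re z, Im z, x)`. -/
def emb2 {s : ℕ} (v : ℂ × (Fin s → ℝ)) : Fin (s + 2) → ℝ :=
  Fin.cons v.1.re (Fin.cons v.1.im v.2)

/-- The map `f₀ : ℝ^{r+1} → ℂ × ℝ^{r-1}` (here `r = m + 1`):
`f₀(x)^{(1)} = exp(Σ_j x^{(j)} log ε̃_j^{(1)})·exp(2πi x^{(r+1)})` and
`f₀(x)^{(i)} = ∏_j (ε̃_j^{(i)})^{x^{(j)}}` for `2 ≤ i ≤ r`. -/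
noncomputable def f0 (m : ℕ) (a : Fin (m + 1) → ℂ) (b : Fin (m + 1) → Fin m → ℝ)
    (x : Fin (m + 2) → ℝ) : ℂ × (Fin m → ℝ) :=
  (Complex.exp (∑ j : Fin (m + 1), (x j.castSucc : ℂ) * Complex.log (a j)) *
      Complex.exp (2 * Real.pi * Complex.I * (x (Fin.last (m + 1)) : ℂ)),
    fun i => ∏ j : Fin (m + 1), (b j i) ^ (x j.castSucc))

/-
The first component of `f0` is `exp ∘ Λ` and the others are `exp ∘ ℓᵢ`, with `Λ : ℝ^{r+1} → ℂ`
and `ℓᵢ : ℝ^{r+1} → ℝ` linear. By the chain rule the real Jacobian matrix at `P` factors as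
`T · A`: `T` is the matrix of `(w, u) ↦ (z w, g u)` with `z = f0(P)^{(1)}`, `gᵢ = f0(P)^{(i)}`,
so `det T = |z|² ∏ gᵢ`; `A` is the matrix of the exponents, whose last column is `2π e₂` (only
the factor `exp(2πi x^{(r+1)})` depends on the last variable), and expanding along it leaves
`(-1)^{r+1} 2π det L` because `Re log ε = log |ε|`.
-/

open Matrix

theorem Matrix.det_eq_of_col_eq_single {R : Type*} [CommRing R] {n : ℕ}
    (M : Matrix (Fin (n + 1)) (Fin (n + 1)) R) {p k : Fin (n + 1)} {c : R}
    (h : ∀ i, M i k = (Pi.single p c : Fin (n + 1) → R) i) :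
    M.det = (-1) ^ ((p : ℕ) + k) * c * (M.submatrix p.succAbove k.succAbove).det := by
  rw [det_succ_column M k, Finset.sum_eq_single p]
  · simp [h]
  · intro i _ hi
    simp [h, hi]
  · simp

section Emb2

variable {s : ℕ}

def emb2MulMatrix (z : ℂ) (g : Fin s → ℝ) : Matrix (Fin (s + 2)) (Fin (s + 2)) ℝ :=
  of (Fin.cons (Fin.cons z.re (Fin.cons (-z.im) 0))
    (Fin.cons (Fin.cons z.im (Fin.cons z.re 0)) fun i => Pi.single i.succ.succ (g i)))

theorem emb2MulMatrix_mulVec_emb2 (z w : ℂ) (g u : Fin s → ℝ) :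
    emb2MulMatrix z g *ᵥ emb2 (w, u) = emb2 (z * w, g * u) := by
  ext i
  refine Fin.cases ?_ (Fin.cases ?_ fun k => ?_) i <;>
    simp [emb2MulMatrix, emb2, mulVec, dotProduct, Fin.sum_univ_succ, Pi.single_apply,
      sub_eq_add_neg, add_comm]

theorem det_emb2MulMatrix (z : ℂ) (g : Fin s → ℝ) :
    (emb2MulMatrix z g).det = Complex.normSq z * ∏ i, g i := by
  have minor0 : (emb2MulMatrix z g).submatrix Fin.succ (0 : Fin (s + 2)).succAbove =
      diagonal (Fin.cons z.re g) := by
    ext i j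
    refine Fin.cases ?_ (fun k => ?_) i <;> refine Fin.cases ?_ (fun l => ?_) j <;>
      simp [emb2MulMatrix, diagonal_apply, Pi.single_apply, Fin.ext_iff, eq_comm]
  have minor1 : (emb2MulMatrix z g).submatrix Fin.succ (0 : Fin (s + 1)).succ.succAbove =
      diagonal (Fin.cons z.im g) := by
    ext i j
    refine Fin.cases ?_ (fun k => ?_) i <;> refine Fin.cases ?_ (fun l => ?_) j <;>
      simp [emb2MulMatrix, diagonal_apply, Pi.single_apply, Fin.ext_iff, eq_comm]
  rw [det_succ_row_zero, Fin.sum_univ_succ, Fin.sum_univ_succ, minor0, minor1]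
  simp [emb2MulMatrix, Fin.prod_univ_succ, Complex.normSq_apply, add_mul, mul_assoc]

theorem of_emb2_mul {n : Type*} [Fintype n] (z : ℂ) (g : Fin s → ℝ) (w : n → ℂ)
    (u : n → Fin s → ℝ) :
    of (fun i j => emb2 (z * w j, g * u j) i) =
      emb2MulMatrix z g * of fun i j => emb2 (w j, u j) i := by
  ext i j
  simp only [← emb2MulMatrix_mulVec_emb2, of_apply, mul_apply, mulVec, dotProduct]

end Emb2

section ExpMap

variable {ι : Type*} [Fintype ι] {s : ℕ}

noncomputable def expMap (c : ι → ℂ) (d : Fin s → ι → ℝ) (x : ι → ℝ) : ℂ × (Fin s → ℝ) :=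
  (Complex.exp (Fintype.linearCombination ℝ c x),
    fun i => Real.exp (Fintype.linearCombination ℝ (d i) x))

theorem hasFDerivAt_expMap (c : ι → ℂ) (d : Fin s → ι → ℝ) (P : ι → ℝ) :
    HasFDerivAt (expMap c d)
      (((expMap c d P).1 • (Fintype.linearCombination ℝ c).toContinuousLinearMap).prod
        (ContinuousLinearMap.pi fun i =>
          (expMap c d P).2 i • (Fintype.linearCombination ℝ (d i)).toContinuousLinearMap)) P :=
  (Fintype.linearCombination ℝ c).toContinuousLinearMap.hasFDerivAt.cexp.prodMk
    (hasFDerivAt_pi.2 fun i =>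
      (Fintype.linearCombination ℝ (d i)).toContinuousLinearMap.hasFDerivAt.exp)

theorem jacobian_expMap [DecidableEq ι] (c : ι → ℂ) (d : Fin s → ι → ℝ) (P : ι → ℝ) :
    of (fun i k => emb2 (fderiv ℝ (expMap c d) P (Pi.single k 1)) i) =
      emb2MulMatrix (expMap c d P).1 (expMap c d P).2 *
        of fun i k => emb2 (c k, fun l => d l k) i := by
  rw [← of_emb2_mul, (hasFDerivAt_expMap c d P).fderiv]
  ext i k
  simp [Fintype.linearCombination_apply_single, Pi.mul_def]

end ExpMap

section F0

variable {m : ℕ} (a : Fin (m + 1) → ℂ) (b : Fin (m + 1) → Fin m → ℝ)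

noncomputable def f0ComplexExponent : Fin (m + 2) → ℂ :=
  Fin.snoc (fun j => Complex.log (a j)) (2 * Real.pi * Complex.I)

noncomputable def f0RealExponent (i : Fin m) : Fin (m + 2) → ℝ :=
  Fin.snoc (fun j => Real.log (b j i)) 0

theorem f0_eq_expMap (hb : ∀ j i, 0 < b j i) :
    f0 m a b = expMap (f0ComplexExponent a) (f0RealExponent b) := by
  funext x
  refine Prod.ext ?_ (funext fun i => ?_)
  · simp only [f0, expMap, f0ComplexExponent, Fintype.linearCombination_apply,
      Fin.sum_univ_castSucc (n := m + 1), Fin.snoc_castSucc, Fin.snoc_last, Complex.exp_add,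
      Complex.real_smul, mul_comm]
  · simp only [f0, expMap, f0RealExponent, Fintype.linearCombination_apply,
      Fin.sum_univ_castSucc (n := m + 1), Fin.snoc_castSucc, Fin.snoc_last, smul_eq_mul,
      mul_zero, add_zero, Real.exp_sum]
    exact Finset.prod_congr rfl fun j _ => by rw [Real.rpow_def_of_pos (hb j i), mul_comm]

theorem det_f0ExponentMatrix :
    (of fun i k => emb2 (f0ComplexExponent a k, fun l => f0RealExponent b l k) i :
        Matrix (Fin (m + 2)) (Fin (m + 2)) ℝ).det =
      (-1 : ℝ) ^ (m + 2) * (2 * Real.pi) *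
        (of fun i j : Fin (m + 1) =>
          if h : (i : ℕ) = 0 then Real.log ‖a j‖
          else Real.log (b j ⟨(i : ℕ) - 1, by omega⟩)).det := by
  rw [det_eq_of_col_eq_single _ (p := 1) (k := Fin.last (m + 1)) (c := 2 * Real.pi)]
  · congr 2
    · rw [Fin.val_one, Fin.val_last, add_comm]
    · ext i j
      refine Fin.cases ?_ (fun k => ?_) i
      · simp [emb2, f0ComplexExponent, Complex.log_re]
      · simp [emb2, f0RealExponent]
  · intro i
    refine Fin.cases ?_ (Fin.cases ?_ fun k => ?_) i <;>
      simp [emb2, f0ComplexExponent, f0RealExponent, Fin.ext_iff]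

end F0

/-- Statement 19, with `r = m + 1` (so that `r ≥ 1`). -/
theorem stmt19 (m : ℕ) (a : Fin (m + 1) → ℂ)
    (b : Fin (m + 1) → Fin m → ℝ) (hb : ∀ j i, 0 < b j i) :
    Differentiable ℝ (f0 m a b) ∧
    ∀ P : Fin (m + 2) → ℝ,
      (Matrix.of fun i j : Fin (m + 2) =>
          emb2 ((fderiv ℝ (f0 m a b) P) (Pi.single j (1 : ℝ))) i).det
        = (-1 : ℝ) ^ (m + 2) * (2 * Real.pi) *
          (Matrix.of fun i j : Fin (m + 1) =>
            if h : (i : ℕ) = 0 then Real.log ‖a j‖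
            else Real.log (b j ⟨(i : ℕ) - 1, by have := i.isLt; omega⟩)).det *
          ‖(f0 m a b P).1‖ ^ 2 * ∏ i : Fin m, (f0 m a b P).2 i := by
  rw [f0_eq_expMap a b hb]
  refine ⟨fun P => (hasFDerivAt_expMap _ _ P).differentiableAt, fun P => ?_⟩
  rw [jacobian_expMap, det_mul, det_emb2MulMatrix, det_f0ExponentMatrix, Complex.sq_norm]
  ring
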